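/- arXiv:1702.04401 — 4 statements merged into one kernel-verified Lean document; each statement's English description precedes it below -/
import Mathlib

section
/- For all x in (0, π) and t in [0,1], sin(t·x) − t·x·cos(t·x) ≥ t³·(sin(x) − x·cos(x)). -/
/-!
With `g u = sin u - u cos u` one has `g' u = u sin u`. For fixed `t ∈ [0, 1]` the difference
`F x = g (t x) - t³ g x` vanishes at `0` and has derivative `t² x (sin (t x) - t sin x)`, which is
nonnegative on `[0, π]` by concavity of `sin` there; hence `F ≥ 0` on `[0, π]`.
-/

open Real Set

lemma hasDerivAt_sin_sub_mul_cos (u : ℝ) :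
    HasDerivAt (fun u => sin u - u * cos u) (u * sin u) u :=
  ((hasDerivAt_sin u).sub ((hasDerivAt_id' u).mul (hasDerivAt_cos u))).congr_deriv (by ring)

lemma mul_sin_le_sin_mul {x t : ℝ} (hx0 : 0 ≤ x) (hxpi : x ≤ π) (ht0 : 0 ≤ t) (ht1 : t ≤ 1) :
    t * sin x ≤ sin (t * x) := by
  simpa using strictConcaveOn_sin_Icc.concaveOn.2 ⟨le_rfl, pi_pos.le⟩ ⟨hx0, hxpi⟩
    (sub_nonneg.2 ht1) ht0 (by ring)

lemma monotoneOn_sin_sub_mul_cos_sub_pow_three_mul {t : ℝ} (ht0 : 0 ≤ t) (ht1 : t ≤ 1) :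
    MonotoneOn (fun x => (sin (t * x) - t * x * cos (t * x)) - t ^ 3 * (sin x - x * cos x))
      (Icc 0 π) := by
  have hF : ∀ x, HasDerivAt
      (fun x => (sin (t * x) - t * x * cos (t * x)) - t ^ 3 * (sin x - x * cos x))
      (t ^ 2 * x * (sin (t * x) - t * sin x)) x := fun x =>
    (((hasDerivAt_sin_sub_mul_cos (t * x)).comp x ((hasDerivAt_id' x).const_mul t)).sub
      ((hasDerivAt_sin_sub_mul_cos x).const_mul (t ^ 3))).congr_deriv (by ring)
  refine monotoneOn_of_hasDerivWithinAt_nonneg (convex_Icc 0 π)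
    (fun x _ => (hF x).continuousAt.continuousWithinAt) (fun x _ => (hF x).hasDerivWithinAt)
    fun x hx => ?_
  rw [interior_Icc] at hx
  exact mul_nonneg (mul_nonneg (sq_nonneg t) hx.1.le)
    (sub_nonneg.2 (mul_sin_le_sin_mul hx.1.le hx.2.le ht0 ht1))

theorem stmt_0 (x t : ℝ) (hx0 : 0 < x) (hxpi : x < Real.pi)
    (ht0 : 0 ≤ t) (ht1 : t ≤ 1) :
    Real.sin (t * x) - t * x * Real.cos (t * x) ≥
      t ^ 3 * (Real.sin x - x * Real.cos x) := by
  have hF := monotoneOn_sin_sub_mul_cos_sub_pow_three_mul ht0 ht1 ⟨le_rfl, pi_pos.le⟩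
    ⟨hx0.le, hxpi.le⟩ hx0.le
  simp only [mul_zero, sin_zero, cos_zero, sub_zero, zero_mul] at hF
  linarith
end

section
/- For all x in (0, 2π), t in [0,1], and real N ≥ 3, t·x − sin(t·x) ≥ t^N·(x − sin(x)). -/
open Real

lemma sin_concave_aux (t u : ℝ) (ht0 : 0 ≤ t) (ht1 : t ≤ 1) (hu0 : 0 ≤ u)
    (hupi : u ≤ Real.pi) : t * Real.sin u ≤ Real.sin (t * u) := by
  have hc := strictConcaveOn_sin_Icc.concaveOn
  have h0 : (0 : ℝ) ∈ Set.Icc 0 Real.pi := ⟨le_refl 0, Real.pi_pos.le⟩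
  have hu : u ∈ Set.Icc 0 Real.pi := ⟨hu0, hupi⟩
  have := hc.2 h0 hu (by linarith : (0:ℝ) ≤ 1 - t) ht0 (by ring)
  simpa using this

theorem stmt_4 (x t N : ℝ) (hx0 : 0 < x) (hx2pi : x < 2 * Real.pi)
    (ht0 : 0 ≤ t) (ht1 : t ≤ 1) (hN : 3 ≤ N) :
    t * x - Real.sin (t * x) ≥ t ^ N * (x - Real.sin x) := by
  have hxs : 0 ≤ x - Real.sin x := by
    have := Real.sin_lt hx0
    linarith
  -- Step 1: the N = 3 (natural power) case
  have key : t * x - Real.sin (t * x) ≥ t ^ (3:ℕ) * (x - Real.sin x) := by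
    set F : ℝ → ℝ := fun y => t * y - Real.sin (t * y) - t ^ (3:ℕ) * (y - Real.sin y)
      with hF
    have hder : ∀ y : ℝ,
        HasDerivAt F (t - Real.cos (t * y) * t - t ^ (3:ℕ) * (1 - Real.cos y)) y := by
      intro y
      have h1 : HasDerivAt (fun y : ℝ => t * y) t y := by
        simpa using (hasDerivAt_id y).const_mul t
      have h2 : HasDerivAt (fun y : ℝ => Real.sin (t * y)) (Real.cos (t * y) * t) y :=
        (Real.hasDerivAt_sin (t * y)).comp y h1
      have h3 : HasDerivAt (fun y : ℝ => y - Real.sin y) (1 - Real.cos y) y :=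
        (hasDerivAt_id y).sub (Real.hasDerivAt_sin y)
      exact (h1.sub h2).sub (h3.const_mul (t ^ (3:ℕ)))
    have hmono : MonotoneOn F (Set.Icc 0 (2 * Real.pi)) := by
      apply monotoneOn_of_deriv_nonneg (convex_Icc _ _)
      · exact fun y _ => ((hder y).continuousAt).continuousWithinAt
      · intro y _
        exact ((hder y).differentiableAt).differentiableWithinAt
      · intro y hy
        rw [interior_Icc] at hy
        rw [(hder y).deriv]
        have hy0 : 0 ≤ y := hy.1.le
        have hy2 : y ≤ 2 * Real.pi := hy.2.le
        have hsin : t * Real.sin (y / 2) ≤ Real.sin (t * (y / 2)) :=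
          sin_concave_aux t (y / 2) ht0 ht1 (by linarith) (by linarith)
        have hsin0 : 0 ≤ Real.sin (y / 2) :=
          Real.sin_nonneg_of_nonneg_of_le_pi (by linarith) (by linarith)
        have hsin0' : 0 ≤ t * Real.sin (y / 2) := mul_nonneg ht0 hsin0
        -- double-angle identities
        have hd1 : Real.cos y = 2 * Real.cos (y / 2) ^ 2 - 1 := by
          have := Real.cos_two_mul (y / 2)
          rw [show 2 * (y / 2) = y by ring] at this
          exact this
        have hd2 : Real.cos (t * y) = 2 * Real.cos (t * (y / 2)) ^ 2 - 1 := by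
          have := Real.cos_two_mul (t * (y / 2))
          rw [show 2 * (t * (y / 2)) = t * y by ring] at this
          exact this
        have hp1 := Real.sin_sq_add_cos_sq (y / 2)
        have hp2 := Real.sin_sq_add_cos_sq (t * (y / 2))
        have hkey : 0 ≤ t * ((Real.sin (t * (y / 2)) - t * Real.sin (y / 2)) *
            (Real.sin (t * (y / 2)) + t * Real.sin (y / 2))) :=
          mul_nonneg ht0 (mul_nonneg (by linarith) (by linarith))
        have e1 : t - Real.cos (t * y) * t - t ^ (3:ℕ) * (1 - Real.cos y) =
            2 * (t * Real.sin (t * (y / 2)) ^ 2 - t ^ 3 * Real.sin (y / 2) ^ 2) := by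
          rw [hd1, hd2]
          linear_combination (-2 * t) * hp2 + 2 * t ^ 3 * hp1
        rw [e1]
        nlinarith [hkey]
    have h0mem : (0:ℝ) ∈ Set.Icc 0 (2 * Real.pi) := ⟨le_refl 0, by positivity⟩
    have hxmem : x ∈ Set.Icc 0 (2 * Real.pi) := ⟨hx0.le, hx2pi.le⟩
    have := hmono h0mem hxmem hx0.le
    have hF0 : F 0 = 0 := by simp [hF]
    rw [hF0] at this
    simpa [hF, ge_iff_le, sub_nonneg] using this
  -- Step 2: t ^ N ≤ t ^ 3
  rcases eq_or_lt_of_le ht0 with h | h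
  · have ht : t = 0 := h.symm
    rw [ht, Real.zero_rpow (by linarith : N ≠ 0)]
    simp
  · have h3 : t ^ N ≤ t ^ ((3:ℕ) : ℝ) := by
      apply Real.rpow_le_rpow_of_exponent_ge h ht1
      simpa using hN
    rw [Real.rpow_natCast] at h3
    have : t ^ N * (x - Real.sin x) ≤ t ^ (3:ℕ) * (x - Real.sin x) :=
      mul_le_mul_of_nonneg_right h3 hxs
    linarith [key]
end

section
/- Let L_v, L_w be real skew-symmetric k×k matrices satisfying L_v·L_w + L_w·L_v = 0 (anti-commuting) and L_v² = −S², L_w² = −S² for a symmetric matrix S. Then for every u ∈ ℝ^k and all nonnegative integers m, n, the scalar (L_v^m u)·(L_w L_v^n u) = 0. -/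
open Matrix

theorem stmt_14 (k : ℕ) (Lv Lw S : Matrix (Fin k) (Fin k) ℝ)
    (hLv : Lvᵀ = -Lv) (hLw : Lwᵀ = -Lw) (hS : Sᵀ = S)
    (hanti : Lv * Lw + Lw * Lv = 0)
    (hv2 : Lv * Lv = -(S * S)) (hw2 : Lw * Lw = -(S * S)) :
    ∀ (u : Fin k → ℝ) (m n : ℕ),
      ((Lv ^ m).mulVec u) ⬝ᵥ ((Lw * Lv ^ n).mulVec u) = 0 := by
  intro u m n
  have hwv : Lw * Lv = (-Lv) * Lw := by
    rw [neg_mul]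
    exact eq_neg_of_add_eq_zero_right hanti
  have hcomm : ∀ p : ℕ, Lw * Lv ^ p = (-Lv) ^ p * Lw := by
    intro p
    induction p with
    | zero => simp
    | succ q ih =>
      rw [pow_succ, ← mul_assoc, ih, mul_assoc, hwv, ← mul_assoc, ← pow_succ]
  set P : Matrix (Fin k) (Fin k) ℝ := (-Lv) ^ (m + n) * Lw with hP
  have hPt : Pᵀ = -P := by
    have hnegt : (-Lv)ᵀ = Lv := by rw [transpose_neg, hLv, neg_neg]
    rw [hP, transpose_mul, transpose_pow, hnegt, hLw, neg_mul, ← hcomm, hcomm]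
  have key : ((Lv ^ m)ᵀ) * (Lw * Lv ^ n) = P := by
    rw [transpose_pow, hLv, hcomm n, ← mul_assoc, ← pow_add, hP]
  have h1 : ((Lv ^ m).mulVec u) ⬝ᵥ ((Lw * Lv ^ n).mulVec u)
      = u ⬝ᵥ P.mulVec u := by
    conv_rhs => rw [← key, dotProduct_mulVec, ← vecMul_vecMul, vecMul_transpose,
      ← dotProduct_mulVec]
  rw [h1]
  have h2 : u ⬝ᵥ P.mulVec u = -(u ⬝ᵥ P.mulVec u) := by
    conv_lhs => rw [dotProduct_mulVec, ← mulVec_transpose, hPt, neg_mulVec,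
      neg_dotProduct, dotProduct_comm]
  linarith
end

section
/- For an analytic function Θ(z) := g'(z)·z − g(z) − 2·g(z)·f'(z)·z/f(z), where f(z) = (1 − e^{−z})/z and g(z) = 1 − sinh(z)/z, the symmetrization satisfies (Θ(z) + Θ(−z))/2 = 2·(sinh(z/2) − (z/2)·cosh(z/2))/sinh(z/2). -/
/-- `f(z) = (1 - e^{-z})/z`. -/
noncomputable def fFun (x : ℝ) : ℝ := (1 - Real.exp (-x)) / x

/-- `g(z) = 1 - sinh(z)/z`. -/
noncomputable def gFun (x : ℝ) : ℝ := 1 - Real.sinh x / x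

/-- `Θ(z) = g'(z)·z - g(z) - 2·g(z)·f'(z)·z/f(z)`. -/
noncomputable def Theta (x : ℝ) : ℝ :=
  deriv gFun x * x - gFun x - 2 * gFun x * deriv fFun x * x / fFun x

/-!
The logarithmic derivative of `f` gives `z f'(z)/f(z) = z/(eᶻ - 1) - 1`, so
`Θ(z) = 2 sinh z / z - cosh z - 1 - 2 g(z) (z/(eᶻ - 1) - 1)`. Since `g` is even and the even part
of `z/(eᶻ - 1)` is `(z/2) coth(z/2)`, symmetrizing leaves an expression in `sinh z / z`, `cosh z`
and `coth(z/2)`, which collapses by `sinh z · coth(z/2) = 1 + cosh z`.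
-/

open Real

lemma hasDerivAt_gFun {x : ℝ} (hx : x ≠ 0) :
    HasDerivAt gFun (-((cosh x * x - sinh x) / x ^ 2)) x := by
  show HasDerivAt (fun y => 1 - sinh y / y) _ x
  simpa using ((hasDerivAt_sinh x).div (hasDerivAt_id' x) hx).const_sub 1

lemma hasDerivAt_fFun {x : ℝ} (hx : x ≠ 0) :
    HasDerivAt fFun ((exp (-x) * x - (1 - exp (-x))) / x ^ 2) x := by
  show HasDerivAt (fun y => (1 - exp (-y)) / y) _ x
  simpa using ((hasDerivAt_neg' x).exp.const_sub 1).fun_div (hasDerivAt_id' x) hx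

lemma deriv_gFun_mul_self {x : ℝ} (hx : x ≠ 0) :
    deriv gFun x * x = sinh x / x - cosh x := by
  rw [(hasDerivAt_gFun hx).deriv]
  field_simp
  ring

lemma deriv_fFun_mul_self_div_fFun {x : ℝ} (hx : x ≠ 0) :
    deriv fFun x * x / fFun x = x / (exp x - 1) - 1 := by
  have hexp : exp x - 1 ≠ 0 := sub_ne_zero.2 (by simpa using hx)
  have hexp0 : exp x ≠ 0 := (exp_pos x).ne'
  rw [(hasDerivAt_fFun hx).deriv, fFun, exp_neg]
  field_simp

lemma Theta_eq {x : ℝ} (hx : x ≠ 0) :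
    Theta x = 2 * (sinh x / x) - cosh x - 1 - 2 * gFun x * (x / (exp x - 1) - 1) := by
  rw [Theta, mul_assoc (2 * gFun x), mul_div_assoc, deriv_fFun_mul_self_div_fFun hx,
    deriv_gFun_mul_self hx, gFun]
  ring

lemma gFun_neg (x : ℝ) : gFun (-x) = gFun x := by
  simp [gFun, neg_div_neg_eq]

lemma div_exp_sub_one_add_neg_div_exp_neg_sub_one {x : ℝ} (hx : x ≠ 0) :
    x / (exp x - 1) + -x / (exp (-x) - 1) = x * (cosh (x / 2) / sinh (x / 2)) := by
  have hx2 : exp x = exp (x / 2) ^ 2 := by rw [← exp_nat_mul]; ring_nf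
  have ht : exp (x / 2) ^ 2 - 1 ≠ 0 := hx2 ▸ sub_ne_zero.2 (by simpa using hx)
  have ht0 : exp (x / 2) ≠ 0 := (exp_pos _).ne'
  rw [sinh_eq, cosh_eq, exp_neg, exp_neg, hx2]
  generalize exp (x / 2) = t at ht ht0 ⊢
  have ht' : 1 - t ^ 2 ≠ 0 := by rwa [← neg_sub, neg_ne_zero]
  field_simp
  ring

lemma sinh_mul_coth_half {x : ℝ} (hx : sinh (x / 2) ≠ 0) :
    sinh x * (cosh (x / 2) / sinh (x / 2)) = 1 + cosh x := by
  rw [show x = 2 * (x / 2) by ring, sinh_two_mul, cosh_two_mul]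
  field_simp
  linear_combination cosh_sq (x / 2)

theorem stmt_16_general (z : ℝ) (hz : z ≠ 0) :
    (Theta z + Theta (-z)) / 2 =
      2 * (Real.sinh (z / 2) - (z / 2) * Real.cosh (z / 2)) /
        Real.sinh (z / 2) := by
  have hsinh : sinh (z / 2) ≠ 0 := by simpa using hz
  rw [Theta_eq hz, Theta_eq (neg_ne_zero.2 hz), gFun_neg, sinh_neg, cosh_neg, neg_div_neg_eq,
    gFun]
  linear_combination (-(1 - sinh z / z)) * div_exp_sub_one_add_neg_div_exp_neg_sub_one hz
    + sinh_mul_coth_half hsinh + cosh (z / 2) / sinh (z / 2) * mul_div_cancel_right₀ (sinh z) hz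
    - 2 * div_self hsinh

theorem stmt_16 (z : ℝ) (hz : z ≠ 0) (hsinh : Real.sinh (z / 2) ≠ 0)
    (hf : fFun z ≠ 0) :
    (Theta z + Theta (-z)) / 2 =
      2 * (Real.sinh (z / 2) - (z / 2) * Real.cosh (z / 2)) /
        Real.sinh (z / 2) :=
  stmt_16_general z hz
end
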